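/- For every integer N ≥ 0, the set 3^{−N}·A, where A = ⋃_{k∈ℤ} (2k, 2k+1), is a measurable subset of ℝ with upper density 1/2 that avoids all the distances 3^{−j} for j = 0, 1, …, N. Consequently, m_{{3^{−j} : 0 ≤ j ≤ N}}(ℝ) ≥ 1/2 for every N. -/

import Mathlib

open MeasureTheory Filter Set Function
open scoped ENNReal Topology

/-! Two points of `A = ⋃ₖ (2k, 2k+1)` differ by a number strictly between `2d - 1` and `2d + 1`
for some integer `d`, so `A` avoids every odd integer distance; dilating by `3^{-N}` turns the
distances `3^{-j}`, `j ≤ N`, into the odd integers `3^{N-j}`. The window `[-T, T]` contains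
`T + O(1)` of the unit intervals of `A`, so its density ratio is `1/2 + O(1/T)`, and density
ratios are invariant under dilation up to rescaling `T`. -/

def evenUnitIntervals : Set ℝ := ⋃ k : ℤ, Ioo (2 * (k : ℝ)) (2 * k + 1)

noncomputable def densityRatio (S : Set ℝ) (T : ℝ) : ℝ≥0∞ :=
  volume (S ∩ Icc (-T) T) / volume (Icc (-T) T)

namespace evenUnitIntervals

theorem measurableSet : MeasurableSet evenUnitIntervals :=
  .iUnion fun _ => measurableSet_Ioo

theorem pairwise_disjoint : Pairwise (Disjoint on fun k : ℤ => Ioo (2 * (k : ℝ)) (2 * k + 1)) :=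
  fun k l hkl => by
    simpa using pairwise_disjoint_Ioo_intCast ℝ (i := 2 * k) (j := 2 * l) (by omega)

theorem sub_ne_of_odd {a b : ℝ} (ha : a ∈ evenUnitIntervals) (hb : b ∈ evenUnitIntervals)
    {m : ℤ} (hm : Odd m) : a - b ≠ m := by
  obtain ⟨k, hak, hka⟩ := mem_iUnion.1 ha
  obtain ⟨l, hbl, hlb⟩ := mem_iUnion.1 hb
  obtain ⟨t, rfl⟩ := hm
  intro h
  push_cast at h
  have hlow : ((2 * (k - l) - 1 : ℤ) : ℝ) < (2 * t + 1 : ℤ) := by push_cast; linarith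
  have hupp : ((2 * t + 1 : ℤ) : ℝ) < (2 * (k - l) + 1 : ℤ) := by push_cast; linarith
  have := Int.cast_lt.1 hlow
  have := Int.cast_lt.1 hupp
  omega

theorem abs_sub_ne_of_odd {a b : ℝ} (ha : a ∈ evenUnitIntervals) (hb : b ∈ evenUnitIntervals)
    {m : ℤ} (hm : Odd m) : |a - b| ≠ m := fun h =>
  (eq_or_eq_neg_of_abs_eq h).elim (sub_ne_of_odd ha hb hm)
    fun h' => sub_ne_of_odd ha hb hm.neg (by rw [h']; push_cast; ring)

theorem volume_biUnion_Ico (a b : ℤ) :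
    volume (⋃ k ∈ Finset.Ico a b, Ioo (2 * (k : ℝ)) (2 * k + 1)) = (b - a).toNat := by
  rw [measure_biUnion_finset (pairwise_disjoint.set_pairwise _) fun _ _ => measurableSet_Ioo]
  simp [Real.volume_Ioo]

theorem biUnion_Ico_subset_inter_Icc {T : ℝ} {n : ℕ} (hn : 2 * (n : ℝ) ≤ T) :
    ⋃ k ∈ Finset.Ico (-(n : ℤ)) n, Ioo (2 * (k : ℝ)) (2 * k + 1) ⊆
      evenUnitIntervals ∩ Icc (-T) T := by
  simp only [subset_def, mem_iUnion, Finset.mem_Ico]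
  rintro x ⟨k, ⟨hnk, hkn⟩, hx⟩
  have hnk' : -(n : ℝ) ≤ k := by exact_mod_cast hnk
  have hkn' : (k : ℝ) + 1 ≤ n := by exact_mod_cast hkn
  exact ⟨mem_iUnion.2 ⟨k, hx⟩, by linarith [hx.1], by linarith [hx.2]⟩

theorem inter_Icc_subset_biUnion_Ico {T : ℝ} {n : ℕ} (hn : T < 2 * (n : ℝ) + 2) :
    evenUnitIntervals ∩ Icc (-T) T ⊆
      ⋃ k ∈ Finset.Ico (-(n : ℤ) - 1) (n + 1), Ioo (2 * (k : ℝ)) (2 * k + 1) := by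
  rintro x ⟨hx, hTx, hxT⟩
  obtain ⟨k, hkx, hxk⟩ := mem_iUnion.1 hx
  have hnk : -(n : ℤ) - 2 < k := by exact_mod_cast (by linarith : -(n : ℝ) - 2 < k)
  have hkn : k < n + 1 := by exact_mod_cast (by linarith : (k : ℝ) < n + 1)
  simp only [mem_iUnion, Finset.mem_Ico]
  exact ⟨k, ⟨by omega, hkn⟩, hkx, hxk⟩

theorem ofReal_sub_two_le_volume_inter_Icc {T : ℝ} (hT : 0 ≤ T) :
    ENNReal.ofReal (T - 2) ≤ volume (evenUnitIntervals ∩ Icc (-T) T) := by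
  set n := ⌊T / 2⌋₊
  have hn : 2 * (n : ℝ) ≤ T := by linarith [Nat.floor_le (div_nonneg hT zero_le_two)]
  have hn' : T < 2 * (n : ℝ) + 2 := by linarith [Nat.lt_floor_add_one (T / 2)]
  calc ENNReal.ofReal (T - 2) ≤ ((n - -(n : ℤ)).toNat : ℝ≥0∞) := by
        rw [show (n - -(n : ℤ)).toNat = 2 * n by omega, ← ENNReal.ofReal_natCast]
        exact ENNReal.ofReal_le_ofReal (by push_cast; linarith)
    _ = volume (⋃ k ∈ Finset.Ico (-(n : ℤ)) n, Ioo (2 * (k : ℝ)) (2 * k + 1)) :=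
        (volume_biUnion_Ico _ _).symm
    _ ≤ volume (evenUnitIntervals ∩ Icc (-T) T) :=
        measure_mono (biUnion_Ico_subset_inter_Icc hn)

theorem volume_inter_Icc_le_ofReal_add_two {T : ℝ} (hT : 0 ≤ T) :
    volume (evenUnitIntervals ∩ Icc (-T) T) ≤ ENNReal.ofReal (T + 2) := by
  set n := ⌊T / 2⌋₊
  have hn : 2 * (n : ℝ) ≤ T := by linarith [Nat.floor_le (div_nonneg hT zero_le_two)]
  have hn' : T < 2 * (n : ℝ) + 2 := by linarith [Nat.lt_floor_add_one (T / 2)]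
  calc volume (evenUnitIntervals ∩ Icc (-T) T)
      ≤ volume (⋃ k ∈ Finset.Ico (-(n : ℤ) - 1) (n + 1), Ioo (2 * (k : ℝ)) (2 * k + 1)) :=
        measure_mono (inter_Icc_subset_biUnion_Ico hn')
    _ = ((n + 1 - (-(n : ℤ) - 1)).toNat : ℝ≥0∞) := volume_biUnion_Ico _ _
    _ ≤ ENNReal.ofReal (T + 2) := by
        rw [show (n + 1 - (-(n : ℤ) - 1)).toNat = 2 * n + 2 by omega, ← ENNReal.ofReal_natCast]
        exact ENNReal.ofReal_le_ofReal (by push_cast; linarith)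

theorem tendsto_densityRatio : Tendsto (densityRatio evenUnitIntervals) atTop (𝓝 (1 / 2)) := by
  have hlim : ∀ d : ℝ,
      Tendsto (fun T => ENNReal.ofReal ((T + d) / (2 * T))) atTop (𝓝 (1 / 2)) := by
    intro d
    have hreal : Tendsto (fun T : ℝ => 1 / 2 + d / 2 * T⁻¹) atTop (𝓝 (1 / 2)) := by
      simpa using tendsto_const_nhds.add (tendsto_inv_atTop_zero.const_mul (d / 2))
    have hofReal : ENNReal.ofReal (1 / 2) = 1 / 2 := by
      rw [ENNReal.ofReal_div_of_pos two_pos]; simp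
    rw [← hofReal]
    refine ENNReal.tendsto_ofReal (hreal.congr' ?_)
    filter_upwards [eventually_gt_atTop 0] with T hT
    field_simp
  have hratio : ∀ T : ℝ, 0 < T → ∀ d, ENNReal.ofReal ((T + d) / (2 * T)) =
      ENNReal.ofReal (T + d) / volume (Icc (-T) T) := fun T hT d => by
    rw [Real.volume_Icc, ENNReal.ofReal_div_of_pos (by linarith), sub_neg_eq_add, two_mul]
  refine tendsto_of_tendsto_of_tendsto_of_le_of_le' (hlim (-2)) (hlim 2) ?_ ?_ <;>
    filter_upwards [eventually_gt_atTop 0] with T hT <;> rw [hratio T hT] <;>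
    refine ENNReal.div_le_div_right ?_ _
  · exact ofReal_sub_two_le_volume_inter_Icc hT.le
  · exact volume_inter_Icc_le_ofReal_add_two hT.le

end evenUnitIntervals

theorem volume_image_mul_left {c : ℝ} (hc : 0 < c) (S : Set ℝ) :
    volume ((c * ·) '' S) = ENNReal.ofReal c * volume S := by
  change volume ((c • ·) '' S) = _
  rw [image_smul, Measure.addHaar_smul, Module.finrank_self, pow_one, abs_of_pos hc]

theorem densityRatio_image_mul_left {c : ℝ} (hc : 0 < c) (S : Set ℝ) (T : ℝ) :
    densityRatio ((c * ·) '' S) T = densityRatio S (T / c) := by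
  have hIcc : Icc (-T) T = (c * ·) '' Icc (-(T / c)) (T / c) := by
    rw [image_mul_left_Icc' hc]; field_simp
  rw [densityRatio, densityRatio, hIcc, ← image_inter (mul_right_injective₀ hc.ne'),
    volume_image_mul_left hc, volume_image_mul_left hc,
    ENNReal.mul_div_mul_left _ _ (by simpa using hc) ENNReal.ofReal_ne_top]

theorem Filter.Tendsto.densityRatio_image_mul_left {S : Set ℝ} {l : ℝ≥0∞}
    (h : Tendsto (densityRatio S) atTop (𝓝 l)) {c : ℝ} (hc : 0 < c) :
    Tendsto (densityRatio ((c * ·) '' S)) atTop (𝓝 l) := by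
  rw [show densityRatio ((c * ·) '' S) = densityRatio S ∘ (· / c) from
    funext (_root_.densityRatio_image_mul_left hc S)]
  exact h.comp (tendsto_id.atTop_div_const hc)

theorem abs_sub_ne_three_zpow_of_mem_image {N j : ℕ} (hj : j ≤ N) {x y : ℝ}
    (hx : x ∈ ((3 : ℝ) ^ (-(N : ℤ)) * ·) '' evenUnitIntervals)
    (hy : y ∈ ((3 : ℝ) ^ (-(N : ℤ)) * ·) '' evenUnitIntervals) :
    |x - y| ≠ (3 : ℝ) ^ (-(j : ℤ)) := by
  obtain ⟨a, ha, rfl⟩ := hx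
  obtain ⟨b, hb, rfl⟩ := hy
  intro h
  rw [← mul_sub, abs_mul, abs_of_pos (by positivity)] at h
  have hodd : Odd ((3 ^ (N - j) : ℕ) : ℤ) := by exact_mod_cast Odd.pow (by decide : Odd 3)
  refine evenUnitIntervals.abs_sub_ne_of_odd ha hb hodd ?_
  have h3 : (3 : ℝ) ≠ 0 := three_ne_zero
  calc |a - b| = (3 : ℝ) ^ (N : ℤ) * ((3 : ℝ) ^ (-(N : ℤ)) * |a - b|) := by
        rw [← mul_assoc, ← zpow_add₀ h3, add_neg_cancel, zpow_zero, one_mul]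
    _ = (3 : ℝ) ^ ((N - j : ℕ) : ℤ) := by
        rw [h, ← zpow_add₀ h3]; congr 1; omega
    _ = ((3 ^ (N - j) : ℕ) : ℤ) := by push_cast; rw [zpow_natCast]

theorem scaled_falconer_example (N : ℕ) :
    MeasurableSet ((fun x : ℝ => (3 : ℝ) ^ (-(N : ℤ)) * x) ''
        (⋃ k : ℤ, Set.Ioo (2 * (k : ℝ)) (2 * (k : ℝ) + 1))) ∧
      Filter.limsup
          (fun T : ℝ =>
            volume (((fun x : ℝ => (3 : ℝ) ^ (-(N : ℤ)) * x) ''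
                (⋃ k : ℤ, Set.Ioo (2 * (k : ℝ)) (2 * (k : ℝ) + 1))) ∩ Set.Icc (-T) T) /
              volume (Set.Icc (-T) T)) Filter.atTop = 1 / 2 ∧
      (∀ x ∈ (fun x : ℝ => (3 : ℝ) ^ (-(N : ℤ)) * x) ''
          (⋃ k : ℤ, Set.Ioo (2 * (k : ℝ)) (2 * (k : ℝ) + 1)),
        ∀ y ∈ (fun x : ℝ => (3 : ℝ) ^ (-(N : ℤ)) * x) ''
          (⋃ k : ℤ, Set.Ioo (2 * (k : ℝ)) (2 * (k : ℝ) + 1)),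
          ∀ j : ℕ, j ≤ N → |x - y| ≠ (3 : ℝ) ^ (-(j : ℤ))) ∧
      (1 / 2 : ℝ≥0∞) ≤
        sSup {m : ℝ≥0∞ | ∃ B : Set ℝ, MeasurableSet B ∧
          (∀ x ∈ B, ∀ y ∈ B, ∀ j : ℕ, j ≤ N → |x - y| ≠ (3 : ℝ) ^ (-(j : ℤ))) ∧
          m = Filter.limsup
            (fun T : ℝ => volume (B ∩ Set.Icc (-T) T) / volume (Set.Icc (-T) T))
            Filter.atTop} := by
  have hc : (0 : ℝ) < 3 ^ (-(N : ℤ)) := by positivity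
  have hmeas : MeasurableSet (((3 : ℝ) ^ (-(N : ℤ)) * ·) '' evenUnitIntervals) :=
    (measurableEmbedding_mulLeft₀ hc.ne').measurableSet_image.2 evenUnitIntervals.measurableSet
  have hdensity : limsup (densityRatio (((3 : ℝ) ^ (-(N : ℤ)) * ·) '' evenUnitIntervals)) atTop
      = 1 / 2 :=
    (evenUnitIntervals.tendsto_densityRatio.densityRatio_image_mul_left hc).limsup_eq
  have havoid : ∀ x ∈ ((3 : ℝ) ^ (-(N : ℤ)) * ·) '' evenUnitIntervals,
      ∀ y ∈ ((3 : ℝ) ^ (-(N : ℤ)) * ·) '' evenUnitIntervals, ∀ j : ℕ, j ≤ N →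
        |x - y| ≠ (3 : ℝ) ^ (-(j : ℤ)) :=
    fun _ hx _ hy _ hj => abs_sub_ne_three_zpow_of_mem_image hj hx hy
  exact ⟨hmeas, hdensity, havoid, le_sSup ⟨_, hmeas, havoid, hdensity.symm⟩⟩
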